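/- Let F be a field of characteristic 2, ζ ∈ F a primitive n-th root of unity with n odd, and suppose the minimal polynomial of ζ over F_2 has degree t. Let S be a set of positive integers all ≤ n. If u, v : S → {0,1} satisfy ∑_{j∈S} u_j · j ≤ t−1 and ∑_{j∈S} v_j · j ≤ t−1, and ∏_{j∈S} (ζ^j + 1)^{u_j} = ∏_{j∈S} (ζ^j + 1)^{v_j}, then u = v. -/

import Mathlib

/-! Over `𝔽₂` the products `∏ (X ^ j + 1) ^ u j` and `∏ (X ^ j + 1) ^ v j` have degree at most
`t - 1`, below the degree of the minimal polynomial of `ζ`, so equal values at `ζ` force equal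
polynomials. A product `∏ j ∈ A, (X ^ j + 1)` with positive exponents determines `A`: the least
element `m` of `A ∪ B` shows up as the coefficient of `X ^ m` on both sides, so it lies in both
sets, and the monic factor `X ^ m + 1` cancels. -/

open Polynomial Finset

theorem prod_pow_eq_prod_filter_eq_one {M : Type*} [CommMonoid M] (S : Finset ℕ) (f : ℕ → M)
    {u : ℕ → ℕ} (hu : ∀ j ∈ S, u j ≤ 1) :
    ∏ j ∈ S, f j ^ u j = ∏ j ∈ S with u j = 1, f j := by
  rw [prod_filter]
  refine prod_congr rfl fun j hj => ?_
  have := hu j hj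
  interval_cases u j <;> simp

section ProdXPowAddOne

variable {R : Type*}

theorem natDegree_prod_X_pow_add_one_pow_le [CommSemiring R] (S : Finset ℕ) (u : ℕ → ℕ) :
    (∏ j ∈ S, ((X : R[X]) ^ j + 1) ^ u j).natDegree ≤ ∑ j ∈ S, u j * j := by
  refine (natDegree_prod_le _ _).trans (sum_le_sum fun j _ => natDegree_pow_le.trans ?_)
  have : ((X : R[X]) ^ j + 1).natDegree ≤ j :=
    natDegree_add_le_of_degree_le (natDegree_X_pow_le j) (by simp)
  exact Nat.mul_le_mul_left _ this

theorem coeff_zero_prod_X_pow_add_one [CommSemiring R] {A : Finset ℕ} (hA : ∀ j ∈ A, 0 < j) :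
    (∏ j ∈ A, ((X : R[X]) ^ j + 1)).coeff 0 = 1 := by
  rw [coeff_zero_eq_eval_zero, eval_prod]
  exact prod_eq_one fun j hj => by simp [zero_pow (hA j hj).ne']

theorem coeff_prod_X_pow_add_one_of_le [CommSemiring R] {A : Finset ℕ} {k : ℕ} (hk : 0 < k)
    (hA : ∀ j ∈ A, k ≤ j) :
    (∏ j ∈ A, ((X : R[X]) ^ j + 1)).coeff k = if k ∈ A then 1 else 0 := by
  classical
  induction A using Finset.induction_on with
  | empty => simp [coeff_one, hk.ne']
  | insert a A haA ih =>
    have hkA : ∀ j ∈ A, k ≤ j := fun j hj => hA j (mem_insert_of_mem hj)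
    rw [prod_insert haA, add_mul, one_mul, coeff_add, coeff_X_pow_mul', ih hkA]
    rcases (hA a (mem_insert_self a A)).eq_or_lt with rfl | hlt
    · simp [haA, coeff_zero_prod_X_pow_add_one fun j hj => hk.trans_le (hkA j hj)]
    · simp [hlt.not_ge, hlt.ne]

theorem eq_of_prod_X_pow_add_one_eq [CommRing R] [Nontrivial R] {A B : Finset ℕ}
    (hA : ∀ j ∈ A, 0 < j) (hB : ∀ j ∈ B, 0 < j)
    (h : ∏ j ∈ A, ((X : R[X]) ^ j + 1) = ∏ j ∈ B, ((X : R[X]) ^ j + 1)) : A = B := by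
  classical
  obtain hAB | hne := (A ∪ B).eq_empty_or_nonempty
  · rw [union_eq_empty] at hAB
    rw [hAB.1, hAB.2]
  set m := (A ∪ B).min' hne
  have hmA : ∀ j ∈ A, m ≤ j := fun j hj => min'_le _ _ (mem_union_left _ hj)
  have hmB : ∀ j ∈ B, m ≤ j := fun j hj => min'_le _ _ (mem_union_right _ hj)
  have hm : m ∈ A ∪ B := min'_mem _ hne
  have hm0 : 0 < m := (mem_union.mp hm).elim (hA m) (hB m)
  have hmAB : m ∈ A ↔ m ∈ B := by
    have := congrArg (coeff · m) h
    simp only [coeff_prod_X_pow_add_one_of_le hm0 hmA, coeff_prod_X_pow_add_one_of_le hm0 hmB] at this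
    split_ifs at this <;> simp_all
  have hmA' : m ∈ A := (mem_union.mp hm).elim id hmAB.mpr
  have hmB' : m ∈ B := hmAB.mp hmA'
  rw [← insert_erase hmA', ← insert_erase hmB', prod_insert (notMem_erase m A),
    prod_insert (notMem_erase m B)] at h
  have hmonic : ((X : R[X]) ^ m + 1).Monic := by
    simpa using monic_X_pow_add_C (1 : R) hm0.ne'
  have herase := eq_of_prod_X_pow_add_one_eq (fun j hj => hA j (mem_of_mem_erase hj))
    (fun j hj => hB j (mem_of_mem_erase hj)) (hmonic.isRegular.left h)
  rw [← insert_erase hmA', ← insert_erase hmB', herase]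
termination_by #A
decreasing_by exact card_erase_lt_of_mem hmA'

end ProdXPowAddOne

theorem eq_of_aeval_eq_of_natDegree_lt {K A : Type*} [Field K] [Ring A] [Algebra K A] {x : A}
    {p q : K[X]} (hp : p.natDegree < (minpoly K x).natDegree)
    (hq : q.natDegree < (minpoly K x).natDegree) (h : aeval x p = aeval x q) : p = q := by
  have hdvd : minpoly K x ∣ p - q := minpoly.dvd K x (by rw [map_sub, h, sub_self])
  exact sub_eq_zero.mp <| eq_zero_of_dvd_of_natDegree_lt hdvd <|
    (natDegree_sub_le p q).trans_lt (max_lt hp hq)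

theorem stmt_2_general (F : Type*) [Field F] [Algebra (ZMod 2) F]
    (n : ℕ) (hn : Odd n) (ζ : F) (hζ : IsPrimitiveRoot ζ n)
    (t : ℕ) (ht : (minpoly (ZMod 2) ζ).natDegree = t)
    (S : Finset ℕ) (hS : ∀ j ∈ S, 0 < j ∧ j ≤ n)
    (u v : ℕ → ℕ) (hu1 : ∀ j, u j ≤ 1) (hv1 : ∀ j, v j ≤ 1)
    (hu : ∑ j ∈ S, u j * j ≤ t - 1) (hv : ∑ j ∈ S, v j * j ≤ t - 1)
    (heq : ∏ j ∈ S, (ζ ^ j + 1) ^ u j = ∏ j ∈ S, (ζ ^ j + 1) ^ v j) :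
    ∀ j ∈ S, u j = v j := by
  have hint : IsIntegral (ZMod 2) ζ :=
    IsIntegral.of_pow hn.pos (by rw [hζ.pow_eq_one]; exact isIntegral_one)
  have ht0 : 0 < t := ht ▸ minpoly.natDegree_pos hint
  have hdeg : ∀ w : ℕ → ℕ, ∑ j ∈ S, w j * j ≤ t - 1 →
      (∏ j ∈ S, ((X : (ZMod 2)[X]) ^ j + 1) ^ w j).natDegree < (minpoly (ZMod 2) ζ).natDegree :=
    fun w hw => ht ▸ (natDegree_prod_X_pow_add_one_pow_le S w).trans_lt (by omega)
  have hpoly := eq_of_aeval_eq_of_natDegree_lt (hdeg u hu) (hdeg v hv) (by simpa using heq)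
  rw [prod_pow_eq_prod_filter_eq_one _ _ fun j _ => hu1 j,
    prod_pow_eq_prod_filter_eq_one _ _ fun j _ => hv1 j] at hpoly
  have hpos : ∀ w : ℕ → ℕ, ∀ j ∈ S.filter (w · = 1), 0 < j :=
    fun w j hj => (hS j (mem_filter.mp hj).1).1
  have hsupp := eq_of_prod_X_pow_add_one_eq (hpos u) (hpos v) hpoly
  intro j hj
  have hjuv := congrArg (j ∈ ·) hsupp
  simp only [mem_filter, hj, true_and, eq_iff_iff] at hjuv
  have := hu1 j
  have := hv1 j
  omega

theorem stmt_2 (F : Type*) [Field F] [CharP F 2] [Algebra (ZMod 2) F]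
    (n : ℕ) (hn : Odd n) (ζ : F) (hζ : IsPrimitiveRoot ζ n)
    (t : ℕ) (ht : (minpoly (ZMod 2) ζ).natDegree = t)
    (S : Finset ℕ) (hS : ∀ j ∈ S, 0 < j ∧ j ≤ n)
    (u v : ℕ → ℕ) (hu1 : ∀ j, u j ≤ 1) (hv1 : ∀ j, v j ≤ 1)
    (hu : ∑ j ∈ S, u j * j ≤ t - 1) (hv : ∑ j ∈ S, v j * j ≤ t - 1)
    (heq : ∏ j ∈ S, (ζ ^ j + 1) ^ u j = ∏ j ∈ S, (ζ ^ j + 1) ^ v j) :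
    ∀ j ∈ S, u j = v j :=
  stmt_2_general F n hn ζ hζ t ht S hS u v hu1 hv1 hu hv heq
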